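/- Let m be even and let f and g be bent functions in m variables with duals f* and g*. Set D_f = f⁻¹(1) and D_g = g⁻¹(1). Then the following are equivalent: (1) f and g are affine equivalent, i.e., there exists an affine permutation π of 𝔽₂^m with g(x) = f(π(x)) for all x ∈ 𝔽₂^m; (2) the designs 𝔻_f and 𝔻_g are isomorphic, i.e., there exist a bijection σ of 𝔽₂^m∖{0} and a bijection τ : D_g → D_f such that b·x + g*(b) = σ(b)·τ(x) + f*(σ(b)) for all b ∈ 𝔽₂^m∖{0} and all x ∈ D_g. -/
import Mathlib


open Finset

/-- dot product on 𝔽₂^m -/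
def dotp {m : ℕ} (a x : Fin m → ZMod 2) : ZMod 2 := ∑ i, a i * x i

/-- (−1)^a for a ∈ 𝔽₂, as an integer -/
def sgn (a : ZMod 2) : ℤ := if a = 0 then 1 else -1

/-- Walsh transform of f on a finite subset P of 𝔽₂^m -/
def walsh {m : ℕ} (P : Finset (Fin m → ZMod 2)) (f : (Fin m → ZMod 2) → ZMod 2)
    (u : Fin m → ZMod 2) : ℤ :=
  ∑ x ∈ P, sgn (f x + dotp u x)

/-- Walsh transform of f on all of 𝔽₂^m -/
def walshF {m : ℕ} (f : (Fin m → ZMod 2) → ZMod 2) (u : Fin m → ZMod 2) : ℤ :=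
  walsh Finset.univ f u




lemma zmod2 (a : ZMod 2) : a = 0 ∨ a = 1 := by revert a; decide

lemma sgn_add (a b : ZMod 2) : sgn (a + b) = sgn a * sgn b := by revert a b; decide

lemma sgn_inj {a b : ZMod 2} (h : sgn a = sgn b) : a = b := by revert h; revert b; revert a; decide

lemma sgn_cases (a : ZMod 2) : sgn a = 1 ∨ sgn a = -1 := by
  unfold sgn; split <;> simp

lemma dotp_comm {m : ℕ} (a x : Fin m → ZMod 2) : dotp a x = dotp x a := by
  unfold dotp; exact Finset.sum_congr rfl fun i _ => mul_comm _ _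

lemma dotp_add_left {m : ℕ} (a b x : Fin m → ZMod 2) :
    dotp (a + b) x = dotp a x + dotp b x := by
  unfold dotp; rw [← Finset.sum_add_distrib]
  exact Finset.sum_congr rfl fun i _ => by simp [add_mul]

lemma dotp_add_right {m : ℕ} (a x y : Fin m → ZMod 2) :
    dotp a (x + y) = dotp a x + dotp a y := by
  rw [dotp_comm, dotp_add_left, dotp_comm x a, dotp_comm y a]

lemma dotp_zero_left {m : ℕ} (x : Fin m → ZMod 2) : dotp 0 x = 0 := by
  unfold dotp; simp

lemma dotp_zero_right {m : ℕ} (x : Fin m → ZMod 2) : dotp x 0 = 0 := by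
  rw [dotp_comm, dotp_zero_left]

lemma dotp_smul_left {m : ℕ} (r : ZMod 2) (a x : Fin m → ZMod 2) :
    dotp (r • a) x = r * dotp a x := by
  unfold dotp; rw [Finset.mul_sum]
  exact Finset.sum_congr rfl fun i _ => by simp [mul_assoc]

lemma dotp_sum_left {m : ℕ} {ι : Type*} (s : Finset ι) (v : ι → (Fin m → ZMod 2))
    (x : Fin m → ZMod 2) : dotp (∑ i ∈ s, v i) x = ∑ i ∈ s, dotp (v i) x := by
  induction s using Finset.cons_induction with
  | empty => simp [dotp_zero_left]
  | cons i s hi ih => rw [Finset.sum_cons, Finset.sum_cons, dotp_add_left, ih]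

lemma dotp_single_one {m : ℕ} (i : Fin m) (x : Fin m → ZMod 2) :
    dotp (Pi.single i 1) x = x i := by
  unfold dotp
  rw [Finset.sum_eq_single i]
  · simp
  · intro j _ hj; simp [Pi.single_apply, hj]
  · simp

lemma dotp_ext {m : ℕ} {v w : Fin m → ZMod 2} (h : ∀ a, dotp a v = dotp a w) : v = w := by
  funext i
  have := h (Pi.single i 1)
  rwa [dotp_single_one, dotp_single_one] at this

lemma vadd_self {m : ℕ} (v : Fin m → ZMod 2) : v + v = 0 := by
  funext i; exact CharTwo.add_self_eq_zero _

lemma sum_single_eq {m : ℕ} (a : Fin m → ZMod 2) :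
    (∑ i, a i • (Pi.single i 1 : Fin m → ZMod 2)) = a := by
  have : ∀ i, a i • (Pi.single i 1 : Fin m → ZMod 2) = Pi.single i (a i) := by
    intro i; rw [← Pi.single_smul, smul_eq_mul, mul_one]
  simp_rw [this]
  exact Finset.univ_sum_single a


/-- the adjoint of a linear endomorphism w.r.t. dotp -/
def adjL {m : ℕ} (F : (Fin m → ZMod 2) →ₗ[ZMod 2] (Fin m → ZMod 2)) :
    (Fin m → ZMod 2) →ₗ[ZMod 2] (Fin m → ZMod 2) where
  toFun := fun x i => dotp (F (Pi.single i 1)) x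
  map_add' := by intro x y; funext i; simp [dotp_add_right]
  map_smul' := by
    intro r x; funext i
    simp only [RingHom.id_apply, Pi.smul_apply, smul_eq_mul]
    rw [dotp_comm, dotp_smul_left, dotp_comm]

lemma adjL_spec {m : ℕ} (F : (Fin m → ZMod 2) →ₗ[ZMod 2] (Fin m → ZMod 2))
    (a x : Fin m → ZMod 2) : dotp (F a) x = dotp a (adjL F x) := by
  have : dotp a (adjL F x) = ∑ i, a i * dotp (F (Pi.single i 1)) x := rfl
  rw [this]
  have : ∀ i : Fin m, a i * dotp (F (Pi.single i 1)) x
      = dotp (F (a i • Pi.single i 1)) x := by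
    intro i; rw [map_smul, dotp_smul_left]
  simp_rw [this]
  rw [← dotp_sum_left, ← map_sum, sum_single_eq]

lemma adjL_spec' {m : ℕ} (F : (Fin m → ZMod 2) →ₗ[ZMod 2] (Fin m → ZMod 2))
    (b y : Fin m → ZMod 2) : dotp (adjL F b) y = dotp b (F y) := by
  rw [dotp_comm, ← adjL_spec, dotp_comm]

lemma adjL_inj {m : ℕ} (F : (Fin m → ZMod 2) →ₗ[ZMod 2] (Fin m → ZMod 2))
    (hF : Function.Surjective F) : Function.Injective (adjL F) := by
  intro x y hxy
  apply dotp_ext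
  intro b
  obtain ⟨a, rfl⟩ := hF b
  rw [adjL_spec, adjL_spec, hxy]

/-- character sum -/
lemma charSum {m : ℕ} {a : Fin m → ZMod 2} (ha : a ≠ 0) :
    ∑ x : Fin m → ZMod 2, sgn (dotp a x) = 0 := by
  have : ∃ i, a i ≠ 0 := by
    by_contra h
    push_neg at h
    exact ha (funext h)
  obtain ⟨i, hi⟩ := this
  have hai : a i = 1 := (zmod2 (a i)).resolve_left hi
  have hde : dotp a (Pi.single i 1) = 1 := by
    rw [dotp_comm, dotp_single_one, hai]
  have key : ∑ x : Fin m → ZMod 2, sgn (dotp a x)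
      = ∑ x : Fin m → ZMod 2, -sgn (dotp a x) := by
    apply Fintype.sum_equiv (Equiv.addRight (Pi.single i 1))
    intro x
    simp only [Equiv.coe_addRight]
    rw [dotp_add_right, hde, sgn_add]
    simp [sgn]
  have h2 : (2 : ℤ) * ∑ x : Fin m → ZMod 2, sgn (dotp a x) = 0 := by
    rw [Finset.sum_neg_distrib] at key
    omega
  omega

lemma card_univ_pow (m : ℕ) :
    (Finset.univ : Finset (Fin m → ZMod 2)).card = 2 ^ m := by
  rw [Finset.card_univ]
  rw [Fintype.card_fun]
  simp

lemma walsh_zero {m : ℕ} (f : (Fin m → ZMod 2) → ZMod 2) :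
    walshF f 0 = (2 ^ m : ℤ)
      - 2 * ((Finset.univ.filter (fun x => f x = 1)).card : ℤ) := by
  unfold walshF walsh
  have h1 : ∀ x : Fin m → ZMod 2, sgn (f x + dotp 0 x) = sgn (f x) := by
    intro x; rw [dotp_zero_left, add_zero]
  simp_rw [h1]
  rw [← Finset.sum_filter_add_sum_filter_not Finset.univ (fun x => f x = 1)]
  have h2 : ∀ x ∈ Finset.univ.filter (fun x => f x = 1), sgn (f x) = -1 := by
    intro x hx
    rw [Finset.mem_filter] at hx
    rw [hx.2]; decide
  have h3 : ∀ x ∈ Finset.univ.filter (fun x => ¬ f x = 1), sgn (f x) = 1 := by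
    intro x hx
    rw [Finset.mem_filter] at hx
    have := (zmod2 (f x)).resolve_right hx.2
    rw [this]; decide
  rw [Finset.sum_congr rfl h2, Finset.sum_congr rfl h3, Finset.sum_const,
    Finset.sum_const]
  have h4 := Finset.card_filter_add_card_filter_not
    (s := (Finset.univ : Finset (Fin m → ZMod 2))) (p := fun x => f x = 1)
  rw [card_univ_pow] at h4
  have h5 : ((Finset.univ.filter (fun x : Fin m → ZMod 2 => ¬ f x = 1)).card : ℤ)
      = 2 ^ m - ((Finset.univ.filter (fun x : Fin m → ZMod 2 => f x = 1)).card : ℤ) := by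
    have := congrArg (Nat.cast : ℕ → ℤ) h4
    push_cast at this
    linarith
  simp only [nsmul_eq_mul, h5]
  ring

/-- if a ≠ 0 and dotp a is constant on the support of f, the walsh value at a is -2k sgn ε -/
lemma walsh_const {m : ℕ} (f : (Fin m → ZMod 2) → ZMod 2) {a : Fin m → ZMod 2}
    (ha : a ≠ 0) (ε : ZMod 2)
    (hc : ∀ x, f x = 1 → dotp a x = ε) :
    walshF f a = -2 * ((Finset.univ.filter (fun x => f x = 1)).card : ℤ) * sgn ε := by
  unfold walshF walsh
  rw [← Finset.sum_filter_add_sum_filter_not Finset.univ (fun x => f x = 1)]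
  have h2 : ∀ x ∈ Finset.univ.filter (fun x => f x = 1),
      sgn (f x + dotp a x) = -sgn ε := by
    intro x hx
    rw [Finset.mem_filter] at hx
    rw [hx.2, hc x hx.2, sgn_add]
    have : sgn 1 = -1 := by decide
    rw [this]; ring
  have h3 : ∀ x ∈ Finset.univ.filter (fun x => ¬ f x = 1),
      sgn (f x + dotp a x) = sgn (dotp a x) := by
    intro x hx
    rw [Finset.mem_filter] at hx
    have := (zmod2 (f x)).resolve_right hx.2
    rw [this, zero_add]
  rw [Finset.sum_congr rfl h2, Finset.sum_congr rfl h3, Finset.sum_const]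
  have hsplit : ∑ x ∈ Finset.univ.filter (fun x => ¬ f x = 1), sgn (dotp a x)
      = - ∑ x ∈ Finset.univ.filter (fun x => f x = 1), sgn (dotp a x) := by
    have := Finset.sum_filter_add_sum_filter_not (Finset.univ : Finset (Fin m → ZMod 2))
      (fun x => f x = 1) (fun x => sgn (dotp a x))
    rw [charSum ha] at this
    omega
  rw [hsplit]
  have h4 : ∀ x ∈ Finset.univ.filter (fun x => f x = 1), sgn (dotp a x) = sgn ε := by
    intro x hx
    rw [Finset.mem_filter] at hx
    rw [hc x hx.2]
  rw [Finset.sum_congr rfl h4, Finset.sum_const]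
  simp only [nsmul_eq_mul, smul_neg]
  ring
/-- For even m ≥ 4, the support of a bent function is not contained in an affine hyperplane. -/
lemma noHyperplane {m : ℕ} (hm : Even m) (hm4 : 4 ≤ m)
    (f fstar : (Fin m → ZMod 2) → ZMod 2)
    (hdf : ∀ a, walshF f a = sgn (fstar a) * 2 ^ (m / 2))
    {a : Fin m → ZMod 2} (ha : a ≠ 0)
    (hc : ∀ x y, f x = 1 → f y = 1 → dotp a x = dotp a y) : False := by
  set k : ℤ := ((Finset.univ.filter (fun x => f x = 1)).card : ℤ) with hk
  have hk0 : 0 ≤ k := Int.natCast_nonneg _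
  -- get a constant value ε
  by_cases hne : ∃ x0, f x0 = 1
  case neg =>
    -- support empty: walshF f a = 0, contradiction
    push_neg at hne
    have hzero : walshF f a = 0 := by
      unfold walshF walsh
      have : ∀ x : Fin m → ZMod 2, sgn (f x + dotp a x) = sgn (dotp a x) := by
        intro x
        have := (zmod2 (f x)).resolve_right (hne x)
        rw [this, zero_add]
      simp_rw [this]
      exact charSum ha
    have := hdf a
    rw [hzero] at this
    rcases sgn_cases (fstar a) with h | h <;> rw [h] at this <;>
      [skip; rw [neg_mul] at this] <;>
      have hpow : (2:ℤ) ^ (m/2) ≠ 0 := by positivity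
    · simp at this; omega
    · omega
  case pos =>
    obtain ⟨x0, hx0⟩ := hne
    set ε := dotp a x0 with hε
    have hconst : ∀ x, f x = 1 → dotp a x = ε := fun x hx => hc x x0 hx hx0
    have hwa := walsh_const f ha ε hconst
    rw [hdf a] at hwa
    -- 2^(m/2) = 2k
    have hpow : (0:ℤ) < 2 ^ (m / 2) := by positivity
    have habs : (2:ℤ) ^ (m / 2) = 2 * k := by
      rcases sgn_cases (fstar a) with h1 | h1 <;> rcases sgn_cases ε with h2 | h2 <;>
        rw [h1, h2] at hwa
      · exfalso; nlinarith
      · nlinarith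
      · nlinarith
      · exfalso; nlinarith
    have hw0 := hdf 0
    rw [walsh_zero] at hw0
    rw [← hk] at hw0
    rcases sgn_cases (fstar 0) with h1 | h1 <;> rw [h1] at hw0
    · -- 2^m - 2k = 2^(m/2) = 2k hence 2^m = 2^(m/2+1)
      have : (2:ℤ) ^ m = 2 ^ (m / 2 + 1) := by
        rw [pow_succ]
        nlinarith
      have hnat : m = m / 2 + 1 := by
        have hN : (2:ℕ) ^ m = 2 ^ (m / 2 + 1) := by exact_mod_cast this
        exact Nat.pow_right_injective (by norm_num) hN
      obtain ⟨t, ht⟩ := hm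
      omega
    · -- 2^m - 2k = -2^(m/2) = -2k hence 2^m = 0
      have : (2:ℤ) ^ m = 0 := by nlinarith
      have hpow : (2:ℤ) ^ m ≠ 0 := by positivity
      exact hpow this
/-- structure of bent functions in 2 variables -/
lemma bent2 (f fstar : (Fin 2 → ZMod 2) → ZMod 2)
    (hdf0 : walshF f 0 = sgn (fstar 0) * 2) :
    ∃ (p : Fin 2 → ZMod 2) (ε : ZMod 2), ∀ x, f x = if x = p then 1 + ε else ε := by
  have hw := walsh_zero f
  rw [hdf0] at hw
  set k := (Finset.univ.filter (fun x => f x = 1)).card with hkdef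
  have hk : k = 1 ∨ k = 3 := by
    rcases sgn_cases (fstar 0) with h | h <;> rw [h] at hw <;> norm_num at hw <;> omega
  rcases hk with hk | hk
  · obtain ⟨p, hp⟩ := Finset.card_eq_one.mp hk
    have hmem : ∀ x, f x = 1 ↔ x = p := by
      intro x
      have h := Finset.ext_iff.mp hp x
      simpa using h
    refine ⟨p, 0, fun x => ?_⟩
    by_cases hx : x = p
    · rw [if_pos hx, add_zero]
      exact (hmem x).mpr hx
    · rw [if_neg hx]
      exact (zmod2 (f x)).resolve_right (fun h => hx ((hmem x).mp h))
  · have h4 := Finset.card_filter_add_card_filter_not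
      (s := (Finset.univ : Finset (Fin 2 → ZMod 2))) (p := fun x => f x = 1)
    rw [card_univ_pow] at h4
    norm_num at h4
    rw [← hkdef, hk] at h4
    have hk' : (Finset.univ.filter (fun x => ¬ f x = 1)).card = 1 := by omega
    obtain ⟨p, hp⟩ := Finset.card_eq_one.mp hk'
    have hmem : ∀ x, ¬ f x = 1 ↔ x = p := by
      intro x
      have h := Finset.ext_iff.mp hp x
      simpa using h
    refine ⟨p, 1, fun x => ?_⟩
    by_cases hx : x = p
    · rw [if_pos hx]
      have h0 : f x = 0 := (zmod2 (f x)).resolve_right ((hmem x).mpr hx)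
      rw [h0]; decide
    · rw [if_neg hx]
      by_contra hne
      exact hx ((hmem x).mp (fun h1 => hne (h1.trans (by decide))))

/-- char-2 rearrangement -/
lemma z2_rearr {A B C D : ZMod 2} (h : A + B = C + D) : C = A + B + D := by
  have : C + (D + D) = A + B + D := by rw [← add_assoc, h]
  rwa [CharTwo.add_self_eq_zero, add_zero] at this

lemma vadd_cancel {m : ℕ} {u v w : Fin m → ZMod 2} (h : u + v = w + v) : u = w := by
  have := congrArg (· + v) h
  simpa [add_assoc, vadd_self] using h
lemma endo_bij {m : ℕ} (F : (Fin m → ZMod 2) →ₗ[ZMod 2] (Fin m → ZMod 2))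
    (h : Function.Injective F) : Function.Bijective F :=
  ⟨h, (LinearMap.injective_iff_surjective).mp h⟩

lemma forward_dir (m : ℕ) (f g fstar gstar : (Fin m → ZMod 2) → ZMod 2)
    (hdf : ∀ a, walshF f a = sgn (fstar a) * 2 ^ (m / 2))
    (hdg : ∀ a, walshF g a = sgn (gstar a) * 2 ^ (m / 2))
    (L : (Fin m → ZMod 2) ≃ₗ[ZMod 2] (Fin m → ZMod 2)) (c : Fin m → ZMod 2)
    (hgf : ∀ x, g x = f (L x + c)) :
    (∃ (σ τ : (Fin m → ZMod 2) → (Fin m → ZMod 2)),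
      Set.BijOn σ {x : Fin m → ZMod 2 | x ≠ 0} {x : Fin m → ZMod 2 | x ≠ 0} ∧
      Set.BijOn τ {x | g x = 1} {x | f x = 1} ∧
      ∀ b : Fin m → ZMod 2, b ≠ 0 → ∀ x : Fin m → ZMod 2, g x = 1 →
        dotp b x + gstar b = dotp (σ b) (τ x) + fstar (σ b)) := by
  set F := L.symm.toLinearMap with hF
  set σ : (Fin m → ZMod 2) → (Fin m → ZMod 2) := fun b => adjL F b with hσ
  set τ : (Fin m → ZMod 2) → (Fin m → ZMod 2) := fun x => L x + c with hτ
  have hσy : ∀ b y, dotp (σ b) y = dotp b (L.symm y) := fun b y => adjL_spec' F b y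
  have hσinj : Function.Injective σ := adjL_inj F L.symm.surjective
  have hσ0 : σ 0 = 0 := map_zero (adjL F)
  have hσsurj : Function.Surjective σ := (endo_bij (adjL F) hσinj).2
  -- key computation of the argument
  have harg : ∀ u x, dotp (σ u) (L x + c) = dotp u x + dotp u (L.symm c) := by
    intro u x
    rw [hσy, map_add, dotp_add_right, L.symm_apply_apply]
  -- dual relation
  have hgstar : ∀ u, gstar u = dotp u (L.symm c) + fstar (σ u) := by
    intro u
    have hre : walshF g u = sgn (dotp u (L.symm c) + fstar (σ u)) * 2 ^ (m / 2) := by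
      unfold walshF walsh
      have := hdf (σ u)
      unfold walshF walsh at this
      rw [sgn_add, mul_assoc, ← this, Finset.mul_sum]
      apply Fintype.sum_equiv (L.toEquiv.trans (Equiv.addRight c))
      intro x
      have he : (L.toEquiv.trans (Equiv.addRight c)) x = L x + c := rfl
      rw [he, ← sgn_add]
      congr 1
      rw [harg, hgf x]
      have : dotp u (L.symm c) + (f (L x + c) + (dotp u x + dotp u (L.symm c)))
          = f (L x + c) + dotp u x
            + (dotp u (L.symm c) + dotp u (L.symm c)) := by ring
      rw [this, CharTwo.add_self_eq_zero, add_zero]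
    rw [hdg u] at hre
    have hpow : ((2:ℤ) ^ (m / 2)) ≠ 0 := by positivity
    exact sgn_inj (mul_right_cancel₀ hpow hre)
  refine ⟨σ, τ, ?_, ?_, ?_⟩
  · refine ⟨?_, hσinj.injOn, ?_⟩
    · intro b hb
      simp only [Set.mem_setOf_eq] at *
      intro h0
      exact hb (hσinj (h0.trans hσ0.symm))
    · intro y hy
      obtain ⟨x, hx⟩ := hσsurj y
      refine ⟨x, ?_, hx⟩
      simp only [Set.mem_setOf_eq] at *
      intro h0
      rw [h0, hσ0] at hx
      exact hy hx.symm
  · have hτinj : Function.Injective τ := by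
      intro x y hxy
      exact L.injective (vadd_cancel hxy)
    refine ⟨?_, hτinj.injOn, ?_⟩
    · intro x hx
      simp only [Set.mem_setOf_eq] at *
      rw [← hgf x]; exact hx
    · intro y hy
      simp only [Set.mem_setOf_eq] at *
      refine ⟨L.symm (y + c), ?_, ?_⟩
      · simp only [Set.mem_setOf_eq]
        rw [hgf, L.apply_symm_apply, add_assoc, vadd_self, add_zero]
        exact hy
      · show L (L.symm (y + c)) + c = y
        rw [L.apply_symm_apply, add_assoc, vadd_self, add_zero]
  · intro b _ x _
    show dotp b x + gstar b = dotp (σ b) (L x + c) + fstar (σ b)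
    rw [harg, hgstar b]
    ring
lemma z2h (A B K : ZMod 2) : (A + K) + (B + K) = A + B := by
  revert A B K; decide

lemma vshift {m : ℕ} {u v w : Fin m → ZMod 2} (h : u + v = w) : u = w + v := by
  rw [← h, add_assoc, vadd_self, add_zero]

lemma vsum3 {m : ℕ} {u v w : Fin m → ZMod 2} (h : u + v + w = 0) : w = u + v := by
  have h2 : u + v + (w + w) = w := by
    rw [← add_assoc, h, zero_add]
  rw [vadd_self, add_zero] at h2
  exact h2.symm

lemma vcancel0 {m : ℕ} {u v : Fin m → ZMod 2} (h : u + v = 0) : v = u := by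
  have h2 := congrArg (fun z => u + z) h
  simpa [← add_assoc, vadd_self] using h2
lemma htwo : (2 : ZMod 2) = 0 := by decide

lemma reverse_main {m : ℕ} (hm : Even m) (hm4 : 4 ≤ m)
    (f g fstar gstar : (Fin m → ZMod 2) → ZMod 2)
    (hdf : ∀ a, walshF f a = sgn (fstar a) * 2 ^ (m / 2))
    (σ τ : (Fin m → ZMod 2) → (Fin m → ZMod 2))
    (hσ : Set.BijOn σ {x : Fin m → ZMod 2 | x ≠ 0} {x : Fin m → ZMod 2 | x ≠ 0})
    (hτ : Set.BijOn τ {x | g x = 1} {x | f x = 1})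
    (hrel : ∀ b : Fin m → ZMod 2, b ≠ 0 → ∀ x : Fin m → ZMod 2, g x = 1 →
        dotp b x + gstar b = dotp (σ b) (τ x) + fstar (σ b))
    (x0 : Fin m → ZMod 2) (hx0 : g x0 = 1) :
    ∃ (L : (Fin m → ZMod 2) ≃ₗ[ZMod 2] (Fin m → ZMod 2)) (c : Fin m → ZMod 2),
      ∀ x, g x = f (L x + c) := by
  have hστ : ∀ b, b ≠ 0 → ∀ x, g x = 1 →
      dotp (σ b) (τ x) = dotp b x + gstar b + fstar (σ b) :=
    fun b hb x hx => z2_rearr (hrel b hb x hx)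
  -- σ is additive on nonzero triples
  have hadd : ∀ b1 b2 : Fin m → ZMod 2, b1 ≠ 0 → b2 ≠ 0 → b1 + b2 ≠ 0 →
      σ (b1 + b2) = σ b1 + σ b2 := by
    intro b1 b2 hb1 hb2 hb12
    set cvec := σ b1 + σ b2 + σ (b1 + b2) with hcvec
    set K : ZMod 2 := (gstar b1 + fstar (σ b1)) + (gstar b2 + fstar (σ b2))
      + (gstar (b1 + b2) + fstar (σ (b1 + b2))) with hK
    have hconstf : ∀ y, f y = 1 → dotp cvec y = K := by
      intro y hy
      obtain ⟨x, hx, rfl⟩ := hτ.2.2 hy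
      have hx' : g x = 1 := hx
      rw [hcvec, dotp_add_left, dotp_add_left,
        hστ b1 hb1 x hx', hστ b2 hb2 x hx', hστ (b1 + b2) hb12 x hx',
        dotp_add_left, hK]
      ring_nf
      rw [htwo]
      ring
    by_cases hc0 : cvec = 0
    · exact (vsum3 hc0).symm ▸ rfl
    · exfalso
      exact noHyperplane hm hm4 f fstar hdf hc0
        (fun x y hx hy => (hconstf x hx).trans (hconstf y hy).symm)
  -- linear extension of σ
  set S : (Fin m → ZMod 2) → (Fin m → ZMod 2) :=
    fun b => if b = 0 then 0 else σ b with hSdef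
  have hS0 : S 0 = 0 := by simp [hSdef]
  have hSne : ∀ b, b ≠ 0 → S b = σ b := by
    intro b hb; simp [hSdef, hb]
  have hSadd : ∀ b1 b2, S (b1 + b2) = S b1 + S b2 := by
    intro b1 b2
    by_cases hb1 : b1 = 0
    · subst hb1; rw [zero_add, hS0, zero_add]
    by_cases hb2 : b2 = 0
    · subst hb2; rw [add_zero, hS0, add_zero]
    by_cases hb12 : b1 + b2 = 0
    · have hb21 : b2 = b1 := vcancel0 hb12
      rw [hb12, hS0, hb21, vadd_self]
    · rw [hSne _ hb12, hSne _ hb1, hSne _ hb2]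
      exact hadd b1 b2 hb1 hb2 hb12
  have hσ0ne : ∀ b, b ≠ 0 → σ b ≠ 0 := fun b hb => hσ.1 hb
  have hSinj : Function.Injective S := by
    intro b b' h
    by_cases hb : b = 0 <;> by_cases hb' : b' = 0
    · rw [hb, hb']
    · exfalso; rw [hb, hS0, hSne _ hb'] at h
      exact hσ0ne b' hb' h.symm
    · exfalso; rw [hb', hS0, hSne _ hb] at h
      exact hσ0ne b hb h
    · rw [hSne _ hb, hSne _ hb'] at h
      exact hσ.2.1 hb hb' h
  set Slin : (Fin m → ZMod 2) →ₗ[ZMod 2] (Fin m → ZMod 2) :=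
    { toFun := S
      map_add' := hSadd
      map_smul' := by
        intro r b
        rcases zmod2 r with hr | hr <;> subst hr
        · rw [zero_smul]
          simp only [RingHom.id_apply, zero_smul]
          exact hS0
        · rw [one_smul]
          simp only [RingHom.id_apply, one_smul] } with hSlin
  have hSlinj : Function.Injective Slin := hSinj
  set SE := LinearEquiv.ofBijective Slin (endo_bij Slin hSlinj) with hSE
  have hSEapp : ∀ b, SE b = S b := fun b => rfl
  have hsymm_ne : ∀ a : Fin m → ZMod 2, a ≠ 0 → SE.symm a ≠ 0 := by
    intro a ha h0
    apply ha
    have := SE.apply_symm_apply a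
    rw [h0] at this
    rw [← this, hSEapp, hS0]
  have hσsymm : ∀ a : Fin m → ZMod 2, a ≠ 0 → σ (SE.symm a) = a := by
    intro a ha
    rw [← hSne _ (hsymm_ne a ha), ← hSEapp, SE.apply_symm_apply]
  -- adjoint
  set M := adjL SE.symm.toLinearMap with hMdef
  have hM : ∀ a y, dotp (SE.symm a) y = dotp a (M y) :=
    fun a y => adjL_spec SE.symm.toLinearMap a y
  set cc := M x0 + τ x0 with hcc
  have hτM : ∀ x, g x = 1 → τ x = M x + cc := by
    intro x hx
    have key : ∀ a, dotp a (τ x + τ x0) = dotp a (M (x + x0)) := by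
      intro a
      by_cases ha : a = 0
      · rw [ha, dotp_zero_left, dotp_zero_left]
      · set b := SE.symm a with hb
        have hbne : b ≠ 0 := hsymm_ne a ha
        have hσb : σ b = a := hσsymm a ha
        have h1 := hστ b hbne x hx
        have h2 := hστ b hbne x0 hx0
        rw [hσb] at h1 h2
        rw [dotp_add_right, h1, h2, ← hM, dotp_add_right]
        ring_nf
        rw [htwo]
        ring
    have heq : τ x + τ x0 = M (x + x0) := dotp_ext key
    rw [map_add] at heq
    rw [hcc, ← add_assoc]
    exact vshift heq
  have hMinj : Function.Injective M := by
    intro y y' h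
    apply dotp_ext
    intro b
    have h1 := hM (SE b) y
    have h2 := hM (SE b) y'
    rw [SE.symm_apply_apply] at h1 h2
    rw [h1, h2, h]
  set ME := LinearEquiv.ofBijective M (endo_bij M hMinj) with hME
  have hMEapp : ∀ y, ME y = M y := fun y => rfl
  refine ⟨ME, cc, fun x => ?_⟩
  rw [hMEapp]
  have hφinj : ∀ y y', M y + cc = M y' + cc → y = y' := by
    intro y y' h
    exact hMinj (vadd_cancel h)
  by_cases hx : g x = 1
  · have h1 : f (τ x) = 1 := hτ.1 hx
    rw [hτM x hx] at h1
    rw [hx, h1]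
  · have h2 : ¬ f (M x + cc) = 1 := by
      intro hf1
      obtain ⟨y, hy, hyx⟩ := hτ.2.2 (show (M x + cc) ∈ {z | f z = 1} from hf1)
      have hy' : g y = 1 := hy
      rw [hτM y hy'] at hyx
      have := hφinj y x hyx
      rw [this] at hy'
      exact hx hy'
    have e1 := (zmod2 (g x)).resolve_right hx
    have e2 := (zmod2 (f (M x + cc))).resolve_right h2
    rw [e1, e2]
lemma reverse_two
    (f g fstar gstar : (Fin 2 → ZMod 2) → ZMod 2)
    (hdf0 : walshF f 0 = sgn (fstar 0) * 2)
    (hdg0 : walshF g 0 = sgn (gstar 0) * 2)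
    (σ τ : (Fin 2 → ZMod 2) → (Fin 2 → ZMod 2))
    (hτ : Set.BijOn τ {x | g x = 1} {x | f x = 1}) :
    ∃ (L : (Fin 2 → ZMod 2) ≃ₗ[ZMod 2] (Fin 2 → ZMod 2)) (c : Fin 2 → ZMod 2),
      ∀ x, g x = f (L x + c) := by
  obtain ⟨p, ε, hg⟩ := bent2 g gstar hdg0
  obtain ⟨q, ε', hf⟩ := bent2 f fstar hdf0
  have hdist : ∀ r : Fin 2 → ZMod 2, ∃ x y : Fin 2 → ZMod 2,
      x ≠ y ∧ x ≠ r ∧ y ≠ r := by decide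
  have hee : ε' = ε := by
    rcases zmod2 ε with h1 | h1 <;> rcases zmod2 ε' with h2 | h2 <;>
      subst h1 <;> subst h2 <;> try rfl
    · -- ε = 0, ε' = 1 : |D_g| = 1, |D_f| = 3
      exfalso
      have hg1 : ∀ x, g x = 1 ↔ x = p := by
        intro x; rw [hg x]; by_cases h : x = p <;> simp [h]
      have hf1 : ∀ y, f y = 1 ↔ y ≠ q := by
        intro y; rw [hf y]; by_cases h : y = q <;> simp [h]
      obtain ⟨x, y, hxy, hxq, hyq⟩ := hdist q
      obtain ⟨a, ha, hax⟩ := hτ.2.2 (show x ∈ {z | f z = 1} from (hf1 x).mpr hxq)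
      obtain ⟨b, hb, hby⟩ := hτ.2.2 (show y ∈ {z | f z = 1} from (hf1 y).mpr hyq)
      have hap : a = p := (hg1 a).mp ha
      have hbp : b = p := (hg1 b).mp hb
      apply hxy
      rw [← hax, ← hby, hap, hbp]
    · -- ε = 1, ε' = 0 : |D_g| = 3, |D_f| = 1
      exfalso
      have hg1 : ∀ x, g x = 1 ↔ x ≠ p := by
        intro x; rw [hg x]; by_cases h : x = p <;> simp [h]
      have hf1 : ∀ y, f y = 1 ↔ y = q := by
        intro y; rw [hf y]; by_cases h : y = q <;> simp [h]
      obtain ⟨x, y, hxy, hxp, hyp⟩ := hdist p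
      have hx1 : x ∈ {z | g z = 1} := (hg1 x).mpr hxp
      have hy1 : y ∈ {z | g z = 1} := (hg1 y).mpr hyp
      have h1 : f (τ x) = 1 := hτ.1 hx1
      have h2 : f (τ y) = 1 := hτ.1 hy1
      apply hxy
      apply hτ.2.1 hx1 hy1
      rw [(hf1 (τ x)).mp h1, (hf1 (τ y)).mp h2]
  subst hee
  have hiff : ∀ x r s : Fin 2 → ZMod 2, (x + (r + s) = s ↔ x = r) := by decide
  refine ⟨LinearEquiv.refl _ _, p + q, fun x => ?_⟩
  simp only [LinearEquiv.refl_apply]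
  rw [hg x, hf (x + (p + q))]
  by_cases h : x = p
  · rw [if_pos h, if_pos ((hiff x p q).mpr h)]
  · rw [if_neg h, if_neg (fun hc => h ((hiff x p q).mp hc))]

theorem stmt_15 (m : ℕ) (hm : Even m) (f g fstar gstar : (Fin m → ZMod 2) → ZMod 2)
    (hdf : ∀ a, walshF f a = sgn (fstar a) * 2 ^ (m / 2))
    (hdg : ∀ a, walshF g a = sgn (gstar a) * 2 ^ (m / 2)) :
    -- (1) f and g are affine equivalent
    (∃ (L : (Fin m → ZMod 2) ≃ₗ[ZMod 2] (Fin m → ZMod 2)) (c : Fin m → ZMod 2),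
      ∀ x, g x = f (L x + c))
    ↔
    -- (2) the designs 𝔻_f and 𝔻_g are isomorphic
    (∃ (σ τ : (Fin m → ZMod 2) → (Fin m → ZMod 2)),
      Set.BijOn σ {x : Fin m → ZMod 2 | x ≠ 0} {x : Fin m → ZMod 2 | x ≠ 0} ∧
      Set.BijOn τ {x | g x = 1} {x | f x = 1} ∧
      ∀ b : Fin m → ZMod 2, b ≠ 0 → ∀ x : Fin m → ZMod 2, g x = 1 →
        dotp b x + gstar b = dotp (σ b) (τ x) + fstar (σ b)) := by
  constructor
  · rintro ⟨L, c, hgf⟩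
    exact forward_dir m f g fstar gstar hdf hdg L c hgf
  · rintro ⟨σ, τ, hσ, hτ, hrel⟩
    by_cases hDg : ∃ x0, g x0 = 1
    · obtain ⟨x0, hx0⟩ := hDg
      have hsplit : m = 0 ∨ m = 2 ∨ 4 ≤ m := by
        obtain ⟨t, ht⟩ := hm; omega
      rcases hsplit with h0 | h2 | h4
      · -- m = 0
        subst h0
        refine ⟨LinearEquiv.refl _ _, 0, fun x => ?_⟩
        have hfx : f (τ x0) = 1 := hτ.1 hx0
        have hx : x = x0 := Subsingleton.elim _ _
        have he : (LinearEquiv.refl (ZMod 2) (Fin 0 → ZMod 2)) x + 0 = τ x0 :=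
          Subsingleton.elim _ _
        rw [he, hfx, hx, hx0]
      · -- m = 2
        subst h2
        have hdf0 : walshF f 0 = sgn (fstar 0) * 2 := by
          have := hdf 0; norm_num at this; exact this
        have hdg0 : walshF g 0 = sgn (gstar 0) * 2 := by
          have := hdg 0; norm_num at this; exact this
        exact reverse_two f g fstar gstar hdf0 hdg0 σ τ hτ
      · exact reverse_main hm h4 f g fstar gstar hdf σ τ hσ hτ hrel x0 hx0
    · push_neg at hDg
      refine ⟨LinearEquiv.refl _ _, 0, fun x => ?_⟩
      have h1 : g x = 0 := (zmod2 _).resolve_right (hDg x)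
      have h2 : f ((LinearEquiv.refl (ZMod 2) (Fin m → ZMod 2)) x + 0) = 0 := by
        apply (zmod2 _).resolve_right
        intro hf1
        obtain ⟨y, hy, _⟩ := hτ.2.2 (show _ ∈ {z | f z = 1} from hf1)
        exact hDg y hy
      rw [h1, h2]
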